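/- If a₀₂ = -6(3 + a₀₁)/(6 + a₀₁) and a₀₃ = (-36 - 18a₀₁ - 17a₀₂)/6 with a₀₁ > -1, a₀₁ ≠ -6, then the quartic/linear kernel S⁴_{4/1} is twice continuously differentiable on ℝ (C² continuous). -/

import Mathlib

noncomputable def S44 (a1 a2 a3 t : ℝ) : ℝ :=
  if |t| < 1 then
    (1 - |t|) * (1 + (1 + a1) * |t| + (1 + a1 + a2) * |t| ^ 2 +
      (1 + a1 + a2 + a3) * |t| ^ 3) / (1 + a1 * |t|)
  else if |t| < 2 then
    (1 - |t|) * (2 - |t|) ^ 2 *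
      ((5 - a1 - 3 * a1 ^ 2 + 3 * a2 - 3 * a1 * a2 + 2 * a3 - a1 * a3) +
        (-1 + 4 * a1 + 3 * a1 ^ 2 - a2 + 3 * a1 * a2 - a3 + a1 * a3) * |t|) /
      ((1 + a1) * (1 - a1 + a1 * |t|))
  else 0

/-!
After substituting the relations for `a₀₂` and `a₀₃`, `S⁴_{4/1}(t) = kernelProfile a₀₁ |t|`, whose
two pieces are rational with denominators positive on `[0, 1]` and `[1, 2]` respectively. Near each
breakpoint `c` the function has the form `f t + (t - c)₊³ r t` with `f`, `r` smooth at `c`, and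
`(t - c)₊³` is `C²`. At `c = 1` and `c = 2` this third-order contact of adjacent pieces is exactly
what the two relations impose. At `c = 0`, on `t > 0` the function `kernelInner |t|` differs from
`kernelInner (-t)` by an odd function with vanishing linear term, hence by `t³` times a smooth
factor.
-/

open Filter Topology

theorem hasDerivAt_posPart_pow (n : ℕ) (x : ℝ) :
    HasDerivAt (fun x : ℝ => max x 0 ^ (n + 2)) ((n + 2) * max x 0 ^ (n + 1)) x := by
  rcases lt_trichotomy x 0 with hx | rfl | hx
  · have h : (fun x : ℝ => max x 0 ^ (n + 2)) =ᶠ[𝓝 x] fun _ => 0 := by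
      filter_upwards [Iio_mem_nhds hx] with y hy
      simp [max_eq_right (Set.mem_Iio.1 hy).le]
    simpa [max_eq_right hx.le] using (hasDerivAt_const x (0 : ℝ)).congr_of_eventuallyEq h
  · have hl : HasDerivWithinAt (fun x : ℝ => max x 0 ^ (n + 2)) 0 (Set.Iic 0) 0 :=
      (hasDerivWithinAt_const _ _ (0 : ℝ)).congr
        (fun y hy => by simp [max_eq_right (Set.mem_Iic.1 hy)]) (by simp)
    have hr : HasDerivWithinAt (fun x : ℝ => max x 0 ^ (n + 2)) 0 (Set.Ici 0) 0 := by
      refine ((hasDerivAt_pow (n + 2) (0 : ℝ)).hasDerivWithinAt.congr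
        (fun y hy => by simp [max_eq_left (Set.mem_Ici.1 hy)]) (by simp)).congr_deriv (by simp)
    have h := hl.union hr
    rw [Set.Iic_union_Ici, hasDerivWithinAt_univ] at h
    simpa using h
  · have h : (fun x : ℝ => max x 0 ^ (n + 2)) =ᶠ[𝓝 x] fun x => x ^ (n + 2) := by
      filter_upwards [Ioi_mem_nhds hx] with y hy
      rw [max_eq_left (Set.mem_Ioi.1 hy).le]
    simpa [max_eq_left hx.le] using (hasDerivAt_pow (n + 2) x).congr_of_eventuallyEq h

theorem contDiff_posPart_pow : ∀ n : ℕ, ContDiff ℝ n (fun x : ℝ => max x 0 ^ (n + 1))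
  | 0 => contDiff_zero.2 (by fun_prop)
  | n + 1 => by
    have hd := hasDerivAt_posPart_pow n
    rw [Nat.cast_succ, contDiff_succ_iff_deriv]
    refine ⟨fun x => (hd x).differentiableAt, by simp, ?_⟩
    rw [funext fun x => (hd x).deriv]
    exact contDiff_const.mul (contDiff_posPart_pow n)

theorem contDiffAt_of_eventuallyEq_add_posPart_pow_mul {F f r : ℝ → ℝ} {a : ℝ} {n : ℕ}
    (hf : ContDiffAt ℝ n f a) (hr : ContDiffAt ℝ n r a)
    (hF : F =ᶠ[𝓝 a] fun t => f t + max (t - a) 0 ^ (n + 1) * r t) :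
    ContDiffAt ℝ n F a :=
  (hf.add ((((contDiff_posPart_pow n).comp (contDiff_id.sub contDiff_const)).contDiffAt).mul
    hr)).congr_of_eventuallyEq hF

theorem one_add_mul_pos {a s : ℝ} (ha : -1 < a) (hs₀ : 0 ≤ s) (hs₁ : s ≤ 1) : 0 < 1 + a * s := by
  rcases hs₁.lt_or_eq with hs₁ | rfl
  · nlinarith [mul_nonneg (by linarith : (0 : ℝ) ≤ 1 + a) hs₀]
  · linarith

noncomputable def kernelInner (a t : ℝ) : ℝ :=
  (1 - t) * ((6 + a) + (1 + a) * (6 + a) * t + (a + 4) * (a - 3) * t ^ 2 +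
    (3 - 6 * a - 2 * a ^ 2) * t ^ 3) / ((6 + a) * (1 + a * t))

noncomputable def kernelOuter (a t : ℝ) : ℝ :=
  3 * (1 - t) * (2 - t) ^ 3 / ((6 + a) * (1 - a + a * t))

noncomputable def kernelProfile (a s : ℝ) : ℝ :=
  if s < 1 then kernelInner a s else if s < 2 then kernelOuter a s else 0

theorem S44_eq_kernelProfile_abs {a1 a2 a3 : ℝ} (ha1 : -1 < a1)
    (ha2 : a2 = -6 * (3 + a1) / (6 + a1)) (ha3 : a3 = (-36 - 18 * a1 - 17 * a2) / 6) :
    S44 a1 a2 a3 = fun t => kernelProfile a1 |t| := by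
  have h1 : 1 + a1 ≠ 0 := by linarith
  have h6 : 6 + a1 ≠ 0 := by linarith
  subst ha3 ha2
  funext t
  unfold S44 kernelProfile kernelInner kernelOuter
  split_ifs
  · field_simp
    ring
  · field_simp
    ring
  · rfl

section
variable {a : ℝ}

theorem contDiffAt_kernelInner (ha : -1 < a) {s : ℝ} (hs₀ : 0 ≤ s) (hs₁ : s ≤ 1) :
    ContDiffAt ℝ 2 (kernelInner a) s :=
  ContDiffAt.div (by fun_prop) (by fun_prop)
    (mul_pos (by linarith) (one_add_mul_pos ha hs₀ hs₁)).ne'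

theorem contDiffAt_kernelOuter (ha : -1 < a) {s : ℝ} (hs₁ : 1 ≤ s) (hs₂ : s ≤ 2) :
    ContDiffAt ℝ 2 (kernelOuter a) s := by
  have h := one_add_mul_pos ha (sub_nonneg.2 hs₁) (by linarith : s - 1 ≤ 1)
  exact ContDiffAt.div (by fun_prop) (by fun_prop) (mul_pos (by linarith) (by linarith)).ne'

-- The last factor is `(kernelInner a t - kernelInner a (-t)) / t ^ 3`.
theorem kernelInner_abs_eventuallyEq (ha : -1 < a) :
    (fun t => kernelInner a |t|) =ᶠ[𝓝 0] fun t => kernelInner a (-t) + max (t - 0) 0 ^ 3 *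
      (2 * ((15 + 11 * a + 3 * a ^ 2) - a * (2 * a ^ 2 + 6 * a - 3) * t ^ 2) /
        ((6 + a) * (1 + a * t) * (1 - a * t))) := by
  have h6 : 6 + a ≠ 0 := by linarith
  have hp : ∀ᶠ t in 𝓝 (0 : ℝ), 1 + a * t ≠ 0 :=
    (by fun_prop : Continuous fun t => 1 + a * t).continuousAt.eventually_ne (by simp)
  have hm : ∀ᶠ t in 𝓝 (0 : ℝ), 1 - a * t ≠ 0 :=
    (by fun_prop : Continuous fun t => 1 - a * t).continuousAt.eventually_ne (by simp)
  filter_upwards [hp, hm] with t hp hm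
  rcases le_or_gt t 0 with ht | ht
  · simp [abs_of_nonpos ht, max_eq_right ht]
  · have hm' : 1 + a * -t ≠ 0 := by rwa [mul_neg, ← sub_eq_add_neg]
    rw [abs_of_pos ht, sub_zero, max_eq_left ht.le]
    unfold kernelInner
    rw [← mul_div_assoc, div_add_div _ _ (mul_ne_zero h6 hm') (mul_ne_zero (mul_ne_zero h6 hp) hm),
      div_eq_div_iff (mul_ne_zero h6 hp) (mul_ne_zero (mul_ne_zero h6 hm')
        (mul_ne_zero (mul_ne_zero h6 hp) hm))]
    ring

theorem contDiffAt_kernelProfile_abs_zero (ha : -1 < a) :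
    ContDiffAt ℝ 2 (fun t => kernelProfile a |t|) 0 := by
  have hnear : (fun t => kernelProfile a |t|) =ᶠ[𝓝 0] fun t => kernelInner a |t| := by
    filter_upwards [Metric.ball_mem_nhds (0 : ℝ) one_pos] with t ht
    rw [Metric.mem_ball, dist_zero_right, Real.norm_eq_abs] at ht
    simp [kernelProfile, ht]
  refine contDiffAt_of_eventuallyEq_add_posPart_pow_mul (n := 2) ?_ ?_
    (hnear.trans (kernelInner_abs_eventuallyEq ha))
  · exact ContDiffAt.comp (g := kernelInner a) 0
      (by simpa using contDiffAt_kernelInner ha le_rfl zero_le_one) contDiff_neg.contDiffAt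
  · exact ContDiffAt.div (by fun_prop) (by fun_prop) (by simp; linarith)

-- The last factor is `(kernelOuter a s - kernelInner a s) / (s - 1) ^ 3`.
theorem kernelProfile_eventuallyEq_one (ha : -1 < a) :
    kernelProfile a =ᶠ[𝓝 1] fun s => kernelInner a s + max (s - 1) 0 ^ 3 *
      (-((18 + 5 * a + a ^ 2) + (-6 + 27 * a + 7 * a ^ 2 + a ^ 3) * s +
          2 * a * (a ^ 2 + 3 * a - 3) * s ^ 2) /
        ((6 + a) * (1 + a * s) * (1 - a + a * s))) := by
  have h6 : 6 + a ≠ 0 := by linarith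
  have hp : ∀ᶠ s in 𝓝 (1 : ℝ), 1 + a * s ≠ 0 :=
    (by fun_prop : Continuous fun s => 1 + a * s).continuousAt.eventually_ne (by simp; linarith)
  have hq : ∀ᶠ s in 𝓝 (1 : ℝ), 1 - a + a * s ≠ 0 :=
    (by fun_prop : Continuous fun s => 1 - a + a * s).continuousAt.eventually_ne (by simp)
  filter_upwards [hp, hq, Iio_mem_nhds one_lt_two] with s hp hq hs₂
  rcases lt_or_ge s 1 with hs₁ | hs₁
  · simp [kernelProfile, hs₁, max_eq_right (sub_nonpos.2 hs₁.le)]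
  · rw [kernelProfile, if_neg hs₁.not_gt, if_pos (Set.mem_Iio.1 hs₂),
      max_eq_left (sub_nonneg.2 hs₁)]
    unfold kernelInner kernelOuter
    rw [← mul_div_assoc, div_add_div _ _ (mul_ne_zero h6 hp) (mul_ne_zero (mul_ne_zero h6 hp) hq),
      div_eq_div_iff (mul_ne_zero h6 hq) (mul_ne_zero (mul_ne_zero h6 hp)
        (mul_ne_zero (mul_ne_zero h6 hp) hq))]
    ring

theorem kernelProfile_eventuallyEq_two :
    kernelProfile a =ᶠ[𝓝 2] fun s => kernelOuter a s + max (s - 2) 0 ^ 3 *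
      (3 * (1 - s) / ((6 + a) * (1 - a + a * s))) := by
  filter_upwards [Ioi_mem_nhds one_lt_two] with s hs₁
  rcases lt_or_ge s 2 with hs₂ | hs₂
  · simp [kernelProfile, hs₂, (Set.mem_Ioi.1 hs₁).not_gt, max_eq_right (sub_nonpos.2 hs₂.le)]
  · simp only [kernelProfile, if_neg (hs₂.trans' one_le_two).not_gt, if_neg hs₂.not_gt,
      max_eq_left (sub_nonneg.2 hs₂), kernelOuter]
    ring

theorem contDiffAt_kernelProfile_of_pos (ha : -1 < a) {s : ℝ} (hs : 0 < s) :
    ContDiffAt ℝ 2 (kernelProfile a) s := by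
  have h6 : 0 < 6 + a := by linarith
  rcases lt_trichotomy s 1 with hs₁ | rfl | hs₁
  · refine (contDiffAt_kernelInner ha hs.le hs₁.le).congr_of_eventuallyEq ?_
    filter_upwards [Iio_mem_nhds hs₁] with t ht
    simp [kernelProfile, Set.mem_Iio.1 ht]
  · refine contDiffAt_of_eventuallyEq_add_posPart_pow_mul (n := 2)
      (contDiffAt_kernelInner ha zero_le_one le_rfl) ?_ (kernelProfile_eventuallyEq_one ha)
    exact ContDiffAt.div (by fun_prop) (by fun_prop)
      (mul_pos (mul_pos h6 (by linarith)) (by linarith)).ne'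
  rcases lt_trichotomy s 2 with hs₂ | rfl | hs₂
  · refine (contDiffAt_kernelOuter ha hs₁.le hs₂.le).congr_of_eventuallyEq ?_
    filter_upwards [Ioo_mem_nhds hs₁ hs₂] with t ht
    simp [kernelProfile, ht.2, ht.1.not_gt]
  · refine contDiffAt_of_eventuallyEq_add_posPart_pow_mul (n := 2)
      (contDiffAt_kernelOuter ha one_le_two le_rfl) ?_ kernelProfile_eventuallyEq_two
    exact ContDiffAt.div (by fun_prop) (by fun_prop) (mul_pos h6 (by linarith)).ne'
  · refine contDiffAt_const (c := (0 : ℝ)).congr_of_eventuallyEq ?_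
    filter_upwards [Ioi_mem_nhds hs₂] with t ht
    have ht : 2 < t := ht
    simp [kernelProfile, ht.not_gt, (one_lt_two.trans ht).not_gt]

end

theorem S44_C2_general (a1 a2 a3 : ℝ) (ha1 : -1 < a1)
    (ha2 : a2 = -6 * (3 + a1) / (6 + a1))
    (ha3 : a3 = (-36 - 18 * a1 - 17 * a2) / 6) :
    ContDiff ℝ 2 (S44 a1 a2 a3) := by
  rw [S44_eq_kernelProfile_abs ha1 ha2 ha3, contDiff_iff_contDiffAt]
  intro t
  rcases eq_or_ne t 0 with rfl | ht
  · exact contDiffAt_kernelProfile_abs_zero ha1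
  · exact (contDiffAt_kernelProfile_of_pos ha1 (abs_pos.2 ht)).comp t (contDiffAt_abs ht)

theorem S44_C2 (a1 a2 a3 : ℝ) (ha1 : -1 < a1) (hne : a1 ≠ -6)
    (ha2 : a2 = -6 * (3 + a1) / (6 + a1))
    (ha3 : a3 = (-36 - 18 * a1 - 17 * a2) / 6) :
    ContDiff ℝ 2 (S44 a1 a2 a3) :=
  S44_C2_general a1 a2 a3 ha1 ha2 ha3
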